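/- arXiv:2409.12382 — 2 statements merged into one kernel-verified Lean document; each statement's English description precedes it below -/
import Mathlib

section
/- Let h : ℝ → ℝ be differentiable and satisfy h'(t) ≥ −α(h(t)) for all t ≥ 0, where α is locally Lipschitz, strictly increasing, and α(0) = 0. If h(0) ≥ 0 then h(t) ≥ 0 for all t ≥ 0. -/
open Set

/- Past the last point `s ≤ x` with `0 ≤ f s`, the function is negative, hence monotone,
so `f x ≥ f s ≥ 0`. -/
theorem image_nonneg_of_deriv_nonneg_of_neg {f : ℝ → ℝ} {a b : ℝ}
    (hf : ContinuousOn f (Icc a b)) (hf' : DifferentiableOn ℝ f (Ioo a b)) (ha : 0 ≤ f a)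
    (hderiv : ∀ x ∈ Ioo a b, f x < 0 → 0 ≤ deriv f x) :
    ∀ x ∈ Icc a b, 0 ≤ f x := by
  intro x ⟨hax, hxb⟩
  by_contra! hx
  set S := Icc a x ∩ f ⁻¹' Ici 0
  have hsub : Icc a x ⊆ Icc a b := Icc_subset_Icc_right hxb
  have hS : IsCompact S := isCompact_Icc.of_isClosed_subset
    ((hf.mono hsub).preimage_isClosed_of_isClosed isClosed_Icc isClosed_Ici) inter_subset_left
  obtain ⟨⟨has, hsx⟩, hfs⟩ : sSup S ∈ S := hS.sSup_mem ⟨a, ⟨le_rfl, hax⟩, ha⟩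
  set s := sSup S
  have hsx' : s < x := hsx.lt_of_ne fun hsx ↦ (not_le.2 hx) (hsx ▸ hfs)
  have hneg : ∀ y ∈ Ioo s x, f y < 0 := fun y ⟨hsy, hyx⟩ ↦ by
    by_contra! hy
    exact (le_csSup hS.bddAbove ⟨⟨has.trans hsy.le, hyx.le⟩, hy⟩).not_gt hsy
  have hIoo : Ioo s x ⊆ Ioo a b := Ioo_subset_Ioo has hxb
  have hmono : MonotoneOn f (Icc s x) := by
    refine monotoneOn_of_deriv_nonneg (convex_Icc s x)
      (hf.mono (Icc_subset_Icc has hxb)) ?_ ?_ <;> rw [interior_Icc]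
    · exact hf'.mono hIoo
    · exact fun y hy ↦ hderiv y (hIoo hy) (hneg y hy)
  exact (not_le.2 hx) (hfs.trans (hmono ⟨le_rfl, hsx⟩ ⟨hsx, le_rfl⟩ hsx))

theorem barrier_comparison_general (h : ℝ → ℝ) (α : ℝ → ℝ)
    (hdiff : Differentiable ℝ h)
    (hαmono : StrictMono α) (hα0 : α 0 = 0)
    (hineq : ∀ t : ℝ, 0 ≤ t → deriv h t ≥ -α (h t))
    (h0 : 0 ≤ h 0) :
    ∀ t : ℝ, 0 ≤ t → 0 ≤ h t := by
  intro t ht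
  refine image_nonneg_of_deriv_nonneg_of_neg hdiff.continuous.continuousOn
    hdiff.differentiableOn h0 (fun u hu hneg ↦ ?_) t ⟨ht, le_rfl⟩
  have hα : α (h u) < 0 := hα0 ▸ hαmono hneg
  linarith [hineq u hu.1.le]

theorem barrier_comparison (h : ℝ → ℝ) (α : ℝ → ℝ)
    (hdiff : Differentiable ℝ h)
    (hαlip : LocallyLipschitz α) (hαmono : StrictMono α) (hα0 : α 0 = 0)
    (hineq : ∀ t : ℝ, 0 ≤ t → deriv h t ≥ -α (h t))
    (h0 : 0 ≤ h 0) :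
    ∀ t : ℝ, 0 ≤ t → 0 ≤ h t :=
  barrier_comparison_general h α hdiff hαmono hα0 hineq h0
end

section
/- Suppose h : ℝ^d → ℝ is continuously differentiable, α : ℝ → ℝ is locally Lipschitz with α(0) = 0 and strictly increasing, and x : [0, T] → ℝ^d is a C¹ trajectory satisfying ⟨∇h(x(t)), x'(t)⟩ ≥ −α(h(x(t))) for all t ∈ [0, T]. If h(x(0)) ≥ 0, then h(x(t)) ≥ 0 for all t ∈ [0, T]. -/
/-!
Along the trajectory, `y = h ∘ x` satisfies `y' ≥ -α(y)`, and `-α(y) > 0` wherever `y < 0`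
since `α` is increasing with `α 0 = 0`. So `y` cannot decrease while it is negative, and
starting from `y 0 ≥ 0` it never becomes negative.
-/

open Set

theorem nonneg_of_hasDerivWithinAt_nonneg_of_neg {y y' : ℝ → ℝ} {a b : ℝ}
    (hy : ContinuousOn y (Icc a b)) (hy' : ∀ t ∈ Ico a b, HasDerivWithinAt y (y' t) (Ici t) t)
    (hsign : ∀ t ∈ Ico a b, y t < 0 → 0 ≤ y' t) (ha : 0 ≤ y a) :
    ∀ t ∈ Icc a b, 0 ≤ y t := by
  -- `-y` can only reach the fence `ε (t - a + 1) > 0` at a point where `y < 0`,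
  -- where its derivative `-y' ≤ 0` is smaller than the fence's slope `ε`.
  have fence : ∀ ε > 0, ∀ t ∈ Icc a b, -y t ≤ ε * (t - a + 1) := fun ε hε =>
    image_le_of_deriv_right_lt_deriv_boundary (f := fun s => -y s) hy.neg
      (fun t ht => (hy' t ht).neg) (by linarith)
      (fun t => ((hasDerivAt_id t).sub_const a |>.add_const 1).const_mul ε)
      fun t ht hcross => by
        have hfence_pos : 0 < ε * (t - a + 1) := mul_pos hε (by linarith [ht.1])
        linarith [hsign t ht (by linarith)]
  intro t ht
  have hc : 0 < t - a + 1 := by linarith [ht.1]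
  refine neg_nonpos.mp (le_of_forall_pos_le_add fun δ hδ => ?_)
  simpa [div_mul_cancel₀ δ hc.ne'] using fence (δ / (t - a + 1)) (div_pos hδ hc) t ht

theorem HasGradientAt.comp_hasDerivAt {F : Type*} [NormedAddCommGroup F]
    [InnerProductSpace ℝ F] [CompleteSpace F] {h : F → ℝ} {x : ℝ → F} {g x' : F} {t : ℝ}
    (hh : HasGradientAt h g (x t)) (hx : HasDerivAt x x' t) :
    HasDerivAt (h ∘ x) (inner ℝ g x') t := by
  simpa using hh.hasFDerivAt.comp_hasDerivAt t hx

theorem cbf_forward_invariance_along_trajectory_general (d : ℕ) (T : ℝ)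
    (h : EuclideanSpace ℝ (Fin d) → ℝ) (hh : ContDiff ℝ 1 h)
    (α : ℝ → ℝ) (hαmono : StrictMono α) (hα0 : α 0 = 0)
    (x : ℝ → EuclideanSpace ℝ (Fin d)) (x' : ℝ → EuclideanSpace ℝ (Fin d))
    (hx : ∀ t ∈ Set.Icc 0 T, HasDerivAt x (x' t) t)
    (hbarrier : ∀ t ∈ Set.Icc 0 T,
      inner ℝ (gradient h (x t)) (x' t) ≥ -α (h (x t)))
    (h0 : 0 ≤ h (x 0)) :
    ∀ t ∈ Set.Icc 0 T, 0 ≤ h (x t) := by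
  have hderiv : ∀ t ∈ Icc 0 T,
      HasDerivAt (h ∘ x) (inner ℝ (gradient h (x t)) (x' t)) t := fun t ht =>
    ((hh.differentiable one_ne_zero) (x t)).hasGradientAt.comp_hasDerivAt (hx t ht)
  refine nonneg_of_hasDerivWithinAt_nonneg_of_neg (y := h ∘ x)
    (fun t ht => (hderiv t ht).continuousAt.continuousWithinAt)
    (fun t ht => (hderiv t (Ico_subset_Icc_self ht)).hasDerivWithinAt) (fun t ht hneg => ?_) h0
  have hα_neg : α (h (x t)) < 0 := hα0 ▸ hαmono hneg
  linarith [hbarrier t (Ico_subset_Icc_self ht)]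

theorem cbf_forward_invariance_along_trajectory (d : ℕ) (T : ℝ) (hT : 0 < T)
    (h : EuclideanSpace ℝ (Fin d) → ℝ) (hh : ContDiff ℝ 1 h)
    (α : ℝ → ℝ) (hαlip : LocallyLipschitz α) (hαmono : StrictMono α) (hα0 : α 0 = 0)
    (x : ℝ → EuclideanSpace ℝ (Fin d)) (x' : ℝ → EuclideanSpace ℝ (Fin d))
    (hx : ∀ t ∈ Set.Icc 0 T, HasDerivAt x (x' t) t)
    (hx' : Continuous x')
    (hbarrier : ∀ t ∈ Set.Icc 0 T,
      inner ℝ (gradient h (x t)) (x' t) ≥ -α (h (x t)))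
    (h0 : 0 ≤ h (x 0)) :
    ∀ t ∈ Set.Icc 0 T, 0 ≤ h (x t) :=
  cbf_forward_invariance_along_trajectory_general d T h hh α hαmono hα0 x x' hx hbarrier h0
end
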